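/- arXiv:1310.2304 — 2 statements merged into one kernel-verified Lean document; each statement's English description precedes it below -/
import Mathlib

section
/- Every lattice point P in the cone L(B_10) = {(l_1,...,l_11) ∈ Z^11 : l_i ≥ 0 and Σ l_i e_i = 0}, where e_1,...,e_11 are the given ray generators of the fan of F_10, has a unique representation P = k·f_1 + l·f_2 + m·f_3 with k,l,m ∈ Z_{≥0}, where f_1=(1,1,1,2,1,2,1,0,0,0,1), f_2=(1,0,1,2,2,2,1,0,0,1,0), f_3=(1,1,1,1,1,2,1,1,1,0,0). -/
/-! The relations `∑ lᵢ eᵢ = 0` are triangular: they determine `l₁, …, l₈` from `l₉, l₁₀, l₁₁`.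
The vectors `f₁, f₂, f₃` are relations whose coordinates `11, 10, 9` form the identity matrix,
so every relation `P` equals `P₁₁ f₁ + P₁₀ f₂ + P₉ f₃`, and in any representation the coefficients
can be read off these three coordinates. For `P` in the cone they are nonnegative. -/

namespace Stmt0

def e : Fin 11 → Fin 8 → ℤ :=
  ![![-1,-1,-1,0,-1,0,0,0], ![0,0,0,-1,0,1,0,0], ![0,0,0,-1,1,0,0,0],
    ![0,0,0,0,0,0,0,1], ![0,0,0,0,0,1,1,0], ![0,0,0,1,0,-1,-1,-1],
    ![0,0,1,0,0,0,0,0], ![0,1,0,0,0,0,0,0], ![1,0,0,0,0,0,1,1],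
    ![1,1,0,-1,0,0,0,0], ![1,1,0,0,0,0,1,0]]

def f : Fin 3 → Fin 11 → ℤ :=
  ![![1,1,1,2,1,2,1,0,0,0,1], ![1,0,1,2,2,2,1,0,0,1,0], ![1,1,1,1,1,2,1,1,1,0,0]]

section Pivot

variable {R ι κ : Type*} [Fintype κ] [DecidableEq κ] {f : κ → ι → R} {p : κ → ι}

theorem sum_smul_apply_of_pivot [Semiring R] (hf : ∀ j k, f j (p k) = if j = k then 1 else 0)
    (t : κ → R) (k : κ) : (∑ j, t j • f j) (p k) = t k := by
  simp [Finset.sum_apply, hf]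

theorem eq_sum_smul_of_pivot [Ring R] {K : Submodule R (ι → R)} (hfK : ∀ j, f j ∈ K)
    (hf : ∀ j k, f j (p k) = if j = k then 1 else 0)
    (hK : ∀ v ∈ K, (∀ k, v (p k) = 0) → v = 0) {P : ι → R} (hP : P ∈ K) :
    P = ∑ k, P (p k) • f k := by
  have hmem : P - ∑ k, P (p k) • f k ∈ K :=
    K.sub_mem hP (K.sum_mem fun k _ => K.smul_mem _ (hfK k))
  have hpivot : ∀ k, (P - ∑ k, P (p k) • f k) (p k) = 0 := fun k => by
    rw [Pi.sub_apply, sum_smul_apply_of_pivot hf, sub_self]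
  exact sub_eq_zero.mp (hK _ hmem hpivot)

end Pivot

def relations : Submodule ℤ (Fin 11 → ℤ) :=
  LinearMap.ker (Fintype.linearCombination ℤ e)

theorem mem_relations {v : Fin 11 → ℤ} : v ∈ relations ↔ ∑ i, v i • e i = 0 :=
  Iff.rfl

def pivot : Fin 3 → Fin 11 := ![10, 9, 8]

theorem f_mem_relations (j : Fin 3) : f j ∈ relations :=
  mem_relations.mpr (by fin_cases j <;> decide)

theorem f_apply_pivot (j k : Fin 3) : f j (pivot k) = if j = k then 1 else 0 := by
  revert j k; decide

theorem eq_zero_of_mem_relations {v : Fin 11 → ℤ} (hv : v ∈ relations)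
    (hpivot : ∀ k, v (pivot k) = 0) : v = 0 := by
  have hrel := mem_relations.mp hv
  simp [funext_iff, Fin.forall_fin_succ, Fin.sum_univ_succ, pivot, e] at hrel hpivot
  funext i
  fin_cases i <;> simp <;> omega

/-- Every lattice point in the cone `L(B₁₀)` has a unique representation as a
nonnegative integer combination of `f 0`, `f 1`, `f 2`. -/
theorem unique_representation_LB10 (P : Fin 11 → ℤ)
    (hnonneg : ∀ i, 0 ≤ P i) (hrel : ∑ i, P i • e i = 0) :
    ∃! t : Fin 3 → ℕ, P = ∑ j, (t j : ℤ) • f j := by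
  have hP : P = ∑ k, P (pivot k) • f k :=
    eq_sum_smul_of_pivot f_mem_relations f_apply_pivot (fun _ => eq_zero_of_mem_relations)
      (mem_relations.mpr hrel)
  refine ⟨fun k => (P (pivot k)).toNat, ?_, fun t ht => funext fun k => ?_⟩
  · simpa only [Int.toNat_of_nonneg (hnonneg _)] using hP
  · have hk := congrFun ht (pivot k)
    rw [sum_smul_apply_of_pivot f_apply_pivot] at hk
    simp [hk]

end Stmt0
end

section
/- Every element P of L(B_25) ⊂ Z^18 = Z^9 × Z^9 can be written in a unique way as P = (k g_1 + l g_2 + m g_3, n g_1 + o g_2 + p g_3) with nonnegative integers k,l,m,n,o,p satisfying k+l+m = n+o+p, where g_1=(1,0,0,1,1,0,1,0,1), g_2=(1,1,0,0,0,1,1,0,1), g_3=(1,1,1,0,0,0,0,1,1). -/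
namespace Stmt15

def e : Fin 18 → Fin 13 → ℤ :=
  ![![-1,-1,-1,-1,-1,-1,-1,-1,-1,-1,-1,-1,-1],
    ![0,0,0,0,0,0,0,0,0,0,0,0,1],
    ![0,0,0,0,0,0,0,0,0,0,0,1,0],
    ![0,0,0,0,0,0,0,0,0,0,1,0,0],
    ![0,0,0,0,0,0,0,0,0,1,0,0,1],
    ![0,0,0,0,0,0,0,0,0,1,1,0,0],
    ![0,0,0,0,0,0,0,0,1,0,0,1,0],
    ![0,0,0,0,0,0,0,0,1,1,1,0,0],
    ![0,0,0,0,0,0,0,1,0,0,0,0,0],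
    ![0,0,0,0,0,0,1,0,0,0,0,0,0],
    ![0,0,0,0,0,1,0,0,0,0,0,0,0],
    ![0,0,0,0,1,0,0,0,0,0,0,0,0],
    ![0,0,0,1,0,0,0,0,0,0,0,0,0],
    ![0,0,1,0,0,1,0,0,0,0,0,0,0],
    ![0,0,1,1,0,0,0,0,0,0,0,0,0],
    ![0,1,0,0,1,0,0,0,0,0,0,0,0],
    ![0,1,1,1,0,0,0,0,0,0,0,0,0],
    ![1,0,0,0,0,0,0,0,0,0,0,0,0]]

def g : Fin 3 → Fin 9 → ℤ :=
  ![![1,0,0,1,1,0,1,0,1], ![1,1,0,0,0,1,1,0,1], ![1,1,1,0,0,0,0,1,1]]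

/-! The thirteen coordinates of `∑ lᵢ eᵢ = 0` decouple: six of them involve only `l₁, …, l₉`, six
more only `l₁₀, …, l₁₈` and `l₁`, and the last one says `l₁₀ = l₁`. Once `l₁` is traded for `l₁₀`,
both halves satisfy the same six equations `HalfRelations`, whose solutions are exactly the
combinations `k g₁ + l g₂ + m g₃`, with `k, l, m` read off the 4th, 6th and 3rd coordinates and
`k + l + m` the first one. -/

theorem _root_.Fin.append_inj {α : Type*} {m n : ℕ} {a a' : Fin m → α} {b b' : Fin n → α} :
    Fin.append a b = Fin.append a' b' ↔ a = a' ∧ b = b' := by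
  refine ⟨fun h ↦ ⟨funext fun i ↦ ?_, funext fun i ↦ ?_⟩, fun ⟨ha, hb⟩ ↦ ha ▸ hb ▸ rfl⟩
  · simpa using congrFun h (Fin.castAdd n i)
  · simpa using congrFun h (Fin.natAdd m i)

lemma sum_smul_g (c : Fin 3 → ℤ) :
    ∑ i, c i • g i =
      ![c 0 + c 1 + c 2, c 1 + c 2, c 2, c 0, c 0, c 1, c 0 + c 1, c 2, c 0 + c 1 + c 2] := by
  funext j
  fin_cases j <;> simp [g, Fin.sum_univ_three]

lemma sum_smul_g_injective : Function.Injective fun c : Fin 3 → ℤ ↦ ∑ i, c i • g i := by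
  intro c c' h
  simp only [sum_smul_g] at h
  funext i
  fin_cases i
  exacts [congrFun h 3, congrFun h 5, congrFun h 2]

lemma sum_natCast_smul_g_injective :
    Function.Injective fun c : Fin 3 → ℕ ↦ ∑ i, (c i : ℤ) • g i :=
  sum_smul_g_injective.comp fun _ _ h ↦ funext fun i ↦ by exact_mod_cast congrFun h i

def HalfRelations (w : Fin 9 → ℤ) : Prop :=
  w 1 + w 4 = w 0 ∧ w 2 + w 6 = w 0 ∧ w 3 + w 5 + w 7 = w 0 ∧ w 4 + w 5 + w 7 = w 0 ∧
    w 6 + w 7 = w 0 ∧ w 8 = w 0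

lemma halfRelations_of_sum_smul_e_eq_zero {a b : Fin 9 → ℤ}
    (h : ∑ i, Fin.append a b i • e i = 0) : HalfRelations a ∧ HalfRelations b ∧ b 0 = a 0 := by
  rw [Fin.sum_univ_add] at h
  simp only [Fin.append_left, Fin.append_right] at h
  simp [Fin.sum_univ_succ, e, funext_iff, Fin.forall_fin_succ] at h
  unfold HalfRelations
  omega

lemma exists_eq_sum_natCast_smul_g {w : Fin 9 → ℤ} (hw : HalfRelations w) (hnonneg : ∀ i, 0 ≤ w i) :
    ∃ c : Fin 3 → ℕ, w = ∑ i, (c i : ℤ) • g i := by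
  refine ⟨![(w 3).toNat, (w 5).toNat, (w 2).toNat], ?_⟩
  have := hnonneg 2
  have := hnonneg 3
  have := hnonneg 5
  obtain ⟨_, _, _, _, _, _⟩ := hw
  rw [sum_smul_g]
  funext i
  fin_cases i <;> simp <;> omega

lemma sum_natCast_smul_g_apply_zero (c : Fin 3 → ℕ) :
    (∑ i, (c i : ℤ) • g i) 0 = ((c 0 + c 1 + c 2 : ℕ) : ℤ) := by
  rw [sum_smul_g]
  simp

/-- Every element of `L(B₂₅) ⊂ ℤ^18 = ℤ^9 × ℤ^9` can be written uniquely as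
`(k g₁ + l g₂ + m g₃, n g₁ + o g₂ + p g₃)` with `k + l + m = n + o + p`. -/
theorem unique_representation_LB25 (P : Fin 18 → ℤ)
    (hnonneg : ∀ i, 0 ≤ P i) (hrel : ∑ i, P i • e i = 0) :
    ∃! t : (Fin 3 → ℕ) × (Fin 3 → ℕ),
      t.1 0 + t.1 1 + t.1 2 = t.2 0 + t.2 1 + t.2 2 ∧
      P = Fin.append (∑ i, (t.1 i : ℤ) • g i) (∑ i, (t.2 i : ℤ) • g i) := by
  obtain ⟨a, b, rfl⟩ : ∃ a b : Fin 9 → ℤ, P = Fin.append a b :=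
    ⟨_, _, (Fin.append_castAdd_natAdd (m := 9) (n := 9) (f := P)).symm⟩
  obtain ⟨ha, hb, hab⟩ := halfRelations_of_sum_smul_e_eq_zero hrel
  obtain ⟨c, rfl⟩ := exists_eq_sum_natCast_smul_g ha fun i ↦ by
    simpa only [Fin.append_left] using hnonneg (Fin.castAdd 9 i)
  obtain ⟨d, rfl⟩ := exists_eq_sum_natCast_smul_g hb fun i ↦ by
    simpa only [Fin.append_right] using hnonneg (Fin.natAdd 9 i)
  refine ⟨(c, d), ⟨?_, rfl⟩, ?_⟩
  · simpa only [sum_natCast_smul_g_apply_zero, Nat.cast_inj] using hab.symm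
  · rintro ⟨c', d'⟩ ⟨-, h⟩
    obtain ⟨hc, hd⟩ := Fin.append_inj.mp h
    exact Prod.ext (sum_natCast_smul_g_injective hc.symm) (sum_natCast_smul_g_injective hd.symm)

end Stmt15
end
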